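/- arXiv:2103.17017 — 2 statements merged into one kernel-verified Lean document; each statement's English description precedes it below -/
import Mathlib

section
/- Let γ(q,z) = (q, γ_j(q,z), z) be a section of T*Q × ℝ → Q × ℝ and let X_H^γ = Tπ ∘ X_H ∘ γ be the projected Hamiltonian vector field. Then X_H ∘ γ = Tγ(X_H^γ) holds if and only if for each j: ∂H/∂q^j + (∂H/∂p_i) ∂γ_j/∂q^i + γ_j ∂H/∂z + γ_i (∂γ_j/∂z)(∂H/∂p_i) - H ∂γ_j/∂z = 0 (evaluated along γ). -/
private lemma clm_decomp {n : ℕ} (T : ((Fin n → ℝ) × ℝ) →L[ℝ] (Fin n → ℝ))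
    (A : Fin n → ℝ) (c : ℝ) (j : Fin n) :
    T (A, c) j = (∑ i, A i * T (Pi.single i 1, 0) j) + c * T (0, 1) j := by
  have hAc : ((A, c) : (Fin n → ℝ) × ℝ)
      = (∑ i, A i • ((Pi.single i 1 : Fin n → ℝ), (0 : ℝ))) + c • ((0 : Fin n → ℝ), (1 : ℝ)) := by
    apply Prod.ext
    · simp [Prod.fst_sum]
      funext k
      simp [Finset.sum_apply, Pi.single_apply]
    · simp [Prod.snd_sum]
  rw [hAc]
  simp only [map_add, map_sum, map_smul, Finset.sum_apply, Pi.add_apply, Pi.smul_apply,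
    smul_eq_mul]

/-- Let γ(q,z) = (q, γⱼ(q,z), z) be a section of T*Q × ℝ → Q × ℝ,
π(q,p,z) = (q,z), and X_H^γ = Tπ ∘ X_H ∘ γ the projected Hamiltonian vector
field.  Then X_H ∘ γ = Tγ(X_H^γ) if and only if for each j (along γ):
∂H/∂qʲ + (∂H/∂pᵢ)∂γⱼ/∂qⁱ + γⱼ ∂H/∂z + γᵢ (∂γⱼ/∂z)(∂H/∂pᵢ) - H ∂γⱼ/∂z = 0. -/
theorem hamilton_jacobi_related_iff (n : ℕ)
    (H : ((Fin n → ℝ) × (Fin n → ℝ) × ℝ) → ℝ) (hH : ContDiff ℝ (⊤ : ℕ∞) H)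
    (XH : ((Fin n → ℝ) × (Fin n → ℝ) × ℝ) → (Fin n → ℝ) × (Fin n → ℝ) × ℝ)
    (hXH : ∀ x, XH x =
      ((fun i => fderiv ℝ H x ((0 : Fin n → ℝ), (Pi.single i 1 : Fin n → ℝ), (0 : ℝ))),
       (fun i => -(fderiv ℝ H x ((Pi.single i 1 : Fin n → ℝ), 0, 0) +
          x.2.1 i * fderiv ℝ H x ((0 : Fin n → ℝ), (0 : Fin n → ℝ), (1 : ℝ)))),
       ((∑ i, x.2.1 i * fderiv ℝ H x ((0 : Fin n → ℝ), (Pi.single i 1 : Fin n → ℝ), (0 : ℝ))) - H x)))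
    (γp : ((Fin n → ℝ) × ℝ) → (Fin n → ℝ)) (hγp : ContDiff ℝ (⊤ : ℕ∞) γp)
    (γ : ((Fin n → ℝ) × ℝ) → (Fin n → ℝ) × (Fin n → ℝ) × ℝ)
    (hγ : ∀ u, γ u = (u.1, γp u, u.2))
    (XHγ : ((Fin n → ℝ) × ℝ) → (Fin n → ℝ) × ℝ)
    (hXHγ : ∀ u, XHγ u = ((XH (γ u)).1, (XH (γ u)).2.2)) :
    (∀ u, XH (γ u) = fderiv ℝ γ u (XHγ u)) ↔
    (∀ (u : (Fin n → ℝ) × ℝ) (j : Fin n),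
        fderiv ℝ H (γ u) ((Pi.single j 1 : Fin n → ℝ), (0 : Fin n → ℝ), (0 : ℝ)) +
        (∑ i, fderiv ℝ H (γ u) ((0 : Fin n → ℝ), (Pi.single i 1 : Fin n → ℝ), (0 : ℝ)) *
          fderiv ℝ (fun v => γp v j) u ((Pi.single i 1 : Fin n → ℝ), (0 : ℝ))) +
        γp u j * fderiv ℝ H (γ u) ((0 : Fin n → ℝ), (0 : Fin n → ℝ), (1 : ℝ)) +
        (∑ i, γp u i * fderiv ℝ (fun v => γp v j) u ((0 : Fin n → ℝ), (1 : ℝ)) *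
          fderiv ℝ H (γ u) ((0 : Fin n → ℝ), (Pi.single i 1 : Fin n → ℝ), (0 : ℝ))) -
        H (γ u) * fderiv ℝ (fun v => γp v j) u ((0 : Fin n → ℝ), (1 : ℝ)) = 0) := by
  have hγpd : ∀ u, HasFDerivAt γp (fderiv ℝ γp u) u :=
    fun u => (hγp.differentiable (by simp) u).hasFDerivAt
  have hγd : ∀ u, fderiv ℝ γ u =
      (ContinuousLinearMap.fst ℝ (Fin n → ℝ) ℝ).prod
        ((fderiv ℝ γp u).prod (ContinuousLinearMap.snd ℝ (Fin n → ℝ) ℝ)) := by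
    intro u
    have h1 : HasFDerivAt (fun v : (Fin n → ℝ) × ℝ => ((v.1 : Fin n → ℝ), (γp v, v.2)))
        ((ContinuousLinearMap.fst ℝ (Fin n → ℝ) ℝ).prod
          ((fderiv ℝ γp u).prod (ContinuousLinearMap.snd ℝ (Fin n → ℝ) ℝ))) u :=
      HasFDerivAt.prodMk (hasFDerivAt_fst) (HasFDerivAt.prodMk (hγpd u) (hasFDerivAt_snd))
    have hγeq : γ = fun v : (Fin n → ℝ) × ℝ => ((v.1 : Fin n → ℝ), (γp v, v.2)) := funext hγ
    rw [hγeq]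
    exact HasFDerivAt.fderiv h1
  have hγpj : ∀ (u) (j : Fin n) (w : (Fin n → ℝ) × ℝ),
      fderiv ℝ (fun v => γp v j) u w = fderiv ℝ γp u w j := by
    intro u j w
    have hc : HasFDerivAt
        (⇑(ContinuousLinearMap.proj (R := ℝ) (φ := fun _ : Fin n => ℝ) j) ∘ γp)
        ((ContinuousLinearMap.proj j (φ := fun _ : Fin n => ℝ)).comp (fderiv ℝ γp u)) u :=
      HasFDerivAt.comp u (ContinuousLinearMap.hasFDerivAt _) (hγpd u)
    have h1 : HasFDerivAt (fun v => γp v j)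
        ((ContinuousLinearMap.proj j (φ := fun _ : Fin n => ℝ)).comp (fderiv ℝ γp u)) u := hc
    rw [HasFDerivAt.fderiv h1]
    rfl
  have hγ21 : ∀ u, (γ u).2.1 = γp u := fun u => by rw [hγ]
  have key : ∀ (u : (Fin n → ℝ) × ℝ) (j : Fin n),
      (fderiv ℝ γp u ((XH (γ u)).1, (XH (γ u)).2.2) j =
        -(fderiv ℝ H (γ u) ((Pi.single j 1 : Fin n → ℝ), 0, 0) +
          γp u j * fderiv ℝ H (γ u) ((0 : Fin n → ℝ), (0 : Fin n → ℝ), (1 : ℝ)))) ↔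
      (fderiv ℝ H (γ u) ((Pi.single j 1 : Fin n → ℝ), (0 : Fin n → ℝ), (0 : ℝ)) +
        (∑ i, fderiv ℝ H (γ u) ((0 : Fin n → ℝ), (Pi.single i 1 : Fin n → ℝ), (0 : ℝ)) *
          fderiv ℝ (fun v => γp v j) u ((Pi.single i 1 : Fin n → ℝ), (0 : ℝ))) +
        γp u j * fderiv ℝ H (γ u) ((0 : Fin n → ℝ), (0 : Fin n → ℝ), (1 : ℝ)) +
        (∑ i, γp u i * fderiv ℝ (fun v => γp v j) u ((0 : Fin n → ℝ), (1 : ℝ)) *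
          fderiv ℝ H (γ u) ((0 : Fin n → ℝ), (Pi.single i 1 : Fin n → ℝ), (0 : ℝ))) -
        H (γ u) * fderiv ℝ (fun v => γp v j) u ((0 : Fin n → ℝ), (1 : ℝ)) = 0) := by
    intro u j
    have h1 : (XH (γ u)).1 =
        fun i => fderiv ℝ H (γ u) ((0 : Fin n → ℝ), (Pi.single i 1 : Fin n → ℝ), (0 : ℝ)) := by
      rw [hXH]
    have h2 : (XH (γ u)).2.2 =
        (∑ i, γp u i * fderiv ℝ H (γ u) ((0 : Fin n → ℝ), (Pi.single i 1 : Fin n → ℝ), (0 : ℝ)))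
          - H (γ u) := by
      rw [hXH, hγ21]
    have hdec := clm_decomp (fderiv ℝ γp u) (XH (γ u)).1 (XH (γ u)).2.2 j
    rw [h1, h2, sub_mul] at hdec
    rw [h1, h2, hdec]
    have hsum : (∑ i, γp u i * fderiv ℝ (fun v => γp v j) u ((0 : Fin n → ℝ), (1 : ℝ)) *
          fderiv ℝ H (γ u) ((0 : Fin n → ℝ), (Pi.single i 1 : Fin n → ℝ), (0 : ℝ)))
        = (∑ i, γp u i * fderiv ℝ H (γ u) ((0 : Fin n → ℝ), (Pi.single i 1 : Fin n → ℝ), (0 : ℝ)))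
            * fderiv ℝ γp u (0, 1) j := by
      rw [Finset.sum_mul]
      exact Finset.sum_congr rfl (fun i _ => by rw [hγpj]; ring)
    have hsum2 : (∑ i, fderiv ℝ H (γ u) ((0 : Fin n → ℝ), (Pi.single i 1 : Fin n → ℝ), (0 : ℝ)) *
          fderiv ℝ (fun v => γp v j) u ((Pi.single i 1 : Fin n → ℝ), (0 : ℝ)))
        = ∑ i, fderiv ℝ H (γ u) ((0 : Fin n → ℝ), (Pi.single i 1 : Fin n → ℝ), (0 : ℝ)) *
            fderiv ℝ γp u (Pi.single i 1, 0) j := by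
      exact Finset.sum_congr rfl (fun i _ => by rw [hγpj])
    rw [hsum, hsum2, hγpj]
    constructor <;> intro hh <;> linarith
  constructor
  · intro h u j
    have h2 := congrFun (congrArg (fun x => x.2.1) (h u)) j
    rw [hγd u, hXHγ u] at h2
    simp only [ContinuousLinearMap.prod_apply, ContinuousLinearMap.coe_fst',
      ContinuousLinearMap.coe_snd'] at h2
    have hL : (XH (γ u)).2.1 j =
        -(fderiv ℝ H (γ u) ((Pi.single j 1 : Fin n → ℝ), 0, 0) +
          γp u j * fderiv ℝ H (γ u) ((0 : Fin n → ℝ), (0 : Fin n → ℝ), (1 : ℝ))) := by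
      rw [hXH, hγ21]
    rw [hL] at h2
    exact (key u j).mp h2.symm
  · intro h u
    rw [hγd u, hXHγ u]
    refine Prod.ext rfl (Prod.ext ?_ rfl)
    funext j
    show (XH (γ u)).2.1 j = fderiv ℝ γp u ((XH (γ u)).1, (XH (γ u)).2.2) j
    have hL : (XH (γ u)).2.1 j =
        -(fderiv ℝ H (γ u) ((Pi.single j 1 : Fin n → ℝ), 0, 0) +
          γp u j * fderiv ℝ H (γ u) ((0 : Fin n → ℝ), (0 : Fin n → ℝ), (1 : ℝ))) := by
      rw [hXH, hγ21]
    rw [hL]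
    exact ((key u j).mpr (h u j)).symm
end

section
/- Let γ(q) = (q, γ_j(q), γ_z(q)) be a section of T*Q × ℝ → Q with Legendrian image (γ_i = ∂γ_z/∂q^i). Then the contact Hamiltonian vector field X_H and its projection X_H^γ = Tπ ∘ X_H ∘ γ are γ-related if and only if H ∘ γ = 0. -/
lemma pi_expand {n : ℕ} {F : Type*} [NormedAddCommGroup F] [NormedSpace ℝ F]
    (L : (Fin n → ℝ) →L[ℝ] F) (v : Fin n → ℝ) :
    L v = ∑ i, v i • L (Pi.single i 1) := by
  conv_lhs => rw [← Finset.univ_sum_single v]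
  rw [map_sum]
  refine Finset.sum_congr rfl fun i _ => ?_
  have h : (Pi.single i (v i) : Fin n → ℝ) = v i • (Pi.single i 1 : Fin n → ℝ) := by
    rw [← Pi.single_smul, smul_eq_mul, mul_one]
  rw [h, map_smul]

lemma triple_expand {n : ℕ}
    (L : (((Fin n → ℝ) × (Fin n → ℝ) × ℝ)) →L[ℝ] ℝ) (v w : Fin n → ℝ) (s : ℝ) :
    L (v, w, s) = (∑ i, v i * L ((Pi.single i 1 : Fin n → ℝ), 0, 0))
      + (∑ i, w i * L ((0 : Fin n → ℝ), (Pi.single i 1 : Fin n → ℝ), (0:ℝ)))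
      + s * L ((0 : Fin n → ℝ), (0 : Fin n → ℝ), (1:ℝ)) := by
  have hsplit : ((v, w, s) : (Fin n → ℝ) × (Fin n → ℝ) × ℝ)
      = (v, 0, 0) + (0, w, 0) + (0, 0, s) := by
    simp [Prod.ext_iff]
  rw [hsplit, map_add, map_add]
  congr 1
  · congr 1
    · have := pi_expand (L.comp ((ContinuousLinearMap.inl ℝ (Fin n → ℝ) ((Fin n → ℝ) × ℝ)))) v
      simpa [smul_eq_mul, Prod.mk_zero_zero] using this
    · have := pi_expand (L.comp (((ContinuousLinearMap.inr ℝ (Fin n → ℝ) ((Fin n → ℝ) × ℝ))).comp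
        (ContinuousLinearMap.inl ℝ (Fin n → ℝ) ℝ))) w
      simpa [smul_eq_mul] using this
  · have : ((0 : Fin n → ℝ), (0 : Fin n → ℝ), s) = s • ((0 : Fin n → ℝ), (0 : Fin n → ℝ), (1:ℝ)) := by
      simp [Prod.ext_iff]
    rw [this, map_smul, smul_eq_mul]

/-- Let γ(q) = (q, γⱼ(q), γ_z(q)) be a section of T*Q × ℝ → Q with Legendrian
image, i.e. γᵢ = ∂γ_z/∂qⁱ.  With π(q,p,z) = q, the contact Hamiltonian vector
field X_H and its projection X_H^γ = Tπ ∘ X_H ∘ γ are γ-related if and only if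
H ∘ γ = 0. -/
theorem legendrian_hamilton_jacobi_iff (n : ℕ)
    (H : ((Fin n → ℝ) × (Fin n → ℝ) × ℝ) → ℝ) (hH : ContDiff ℝ (⊤ : ℕ∞) H)
    (XH : ((Fin n → ℝ) × (Fin n → ℝ) × ℝ) → (Fin n → ℝ) × (Fin n → ℝ) × ℝ)
    (hXH : ∀ x, XH x =
      ((fun i => fderiv ℝ H x ((0 : Fin n → ℝ), (Pi.single i 1 : Fin n → ℝ), (0 : ℝ))),
       (fun i => -(fderiv ℝ H x ((Pi.single i 1 : Fin n → ℝ), 0, 0) +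
          x.2.1 i * fderiv ℝ H x ((0 : Fin n → ℝ), (0 : Fin n → ℝ), (1 : ℝ)))),
       ((∑ i, x.2.1 i * fderiv ℝ H x ((0 : Fin n → ℝ), (Pi.single i 1 : Fin n → ℝ), (0 : ℝ))) - H x)))
    (γz : (Fin n → ℝ) → ℝ) (hγz : ContDiff ℝ (⊤ : ℕ∞) γz)
    (γ : (Fin n → ℝ) → (Fin n → ℝ) × (Fin n → ℝ) × ℝ)
    -- the section is the 1-jet of γz, i.e. it has Legendrian image:
    (hγ : ∀ q, γ q = (q, (fun i => fderiv ℝ γz q (Pi.single i 1)), γz q))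
    (XHγ : (Fin n → ℝ) → (Fin n → ℝ))
    (hXHγ : ∀ q, XHγ q = (XH (γ q)).1) :
    (∀ q, XH (γ q) = fderiv ℝ γ q (XHγ q)) ↔ (∀ q, H (γ q) = 0) := by
  have hdz : ∀ q, HasFDerivAt γz (fderiv ℝ γz q) q :=
    fun q => (hγz.differentiable (by simp) q).hasFDerivAt
  set f' : (Fin n → ℝ) → ((Fin n → ℝ) →L[ℝ] ℝ) := fderiv ℝ γz with hf'def
  have hcf' : ContDiff ℝ (⊤ : ℕ∞) f' := hγz.fderiv_right (by simp)
  set f'' : (Fin n → ℝ) → ((Fin n → ℝ) →L[ℝ] ((Fin n → ℝ) →L[ℝ] ℝ)) := fderiv ℝ f' with hf''def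
  have hdf' : ∀ q, HasFDerivAt f' (f'' q) q :=
    fun q => (hcf'.differentiable (by simp) q).hasFDerivAt
  have hsymm : ∀ q v w, f'' q v w = f'' q w v := fun q v w =>
    second_derivative_symmetric hdz (hdf' q) v w
  set Φ : ((Fin n → ℝ) →L[ℝ] ℝ) →L[ℝ] (Fin n → ℝ) :=
    ContinuousLinearMap.pi (fun i => ContinuousLinearMap.apply ℝ ℝ (Pi.single i 1)) with hΦdef
  have hΦ : ∀ (T : (Fin n → ℝ) →L[ℝ] ℝ) i, Φ T i = T (Pi.single i 1) := fun T i => rfl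
  set P : (Fin n → ℝ) → (Fin n → ℝ) := fun q => Φ (f' q) with hPdef
  have hdP : ∀ q, HasFDerivAt P (Φ.comp (f'' q)) q :=
    fun q => Φ.hasFDerivAt.comp q (hdf' q)
  set Lγ : (Fin n → ℝ) → ((Fin n → ℝ) →L[ℝ] ((Fin n → ℝ) × (Fin n → ℝ) × ℝ)) :=
    fun q => (ContinuousLinearMap.id ℝ (Fin n → ℝ)).prod ((Φ.comp (f'' q)).prod (f' q)) with hLγdef
  have hγfun : γ = fun q => (q, P q, γz q) := funext fun q => by rw [hγ q]; rfl
  have hdγ : ∀ q, HasFDerivAt γ (Lγ q) q := fun q => by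
    rw [hγfun]; exact HasFDerivAt.prodMk (hasFDerivAt_id q) (HasFDerivAt.prodMk (hdP q) (hdz q))
  have hfγ : ∀ q, fderiv ℝ γ q = Lγ q := fun q => (hdγ q).fderiv
  have hγ2 : ∀ q, (γ q).2.1 = P q := fun q => by rw [hγ q]; rfl
  have hA : ∀ q i, XHγ q i = fderiv ℝ H (γ q)
      ((0 : Fin n → ℝ), (Pi.single i 1 : Fin n → ℝ), (0:ℝ)) := fun q i => by
    rw [hXHγ q, hXH (γ q)]
  -- third component of Lγ q applied to XHγ q
  have h3comp : ∀ q, (Lγ q (XHγ q)).2.2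
      = ∑ i, (γ q).2.1 i * fderiv ℝ H (γ q)
          ((0 : Fin n → ℝ), (Pi.single i 1 : Fin n → ℝ), (0:ℝ)) := by
    intro q
    have : (Lγ q (XHγ q)).2.2 = f' q (XHγ q) := rfl
    rw [this, pi_expand (f' q) (XHγ q)]
    refine Finset.sum_congr rfl fun i _ => ?_
    rw [hA q i, smul_eq_mul, mul_comm]
    congr 1
    rw [hγ2 q]
    exact (hΦ (f' q) i).symm
  constructor
  · intro hrel q
    have h3 := congrArg (fun x : (Fin n → ℝ) × (Fin n → ℝ) × ℝ => x.2.2) (hrel q)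
    simp only [hXH (γ q), hfγ q] at h3
    rw [h3comp q] at h3
    linarith [h3]
  · intro hHz q
    rw [hfγ q]
    -- chain rule: derivative of H ∘ γ vanishes
    have hchain : (fderiv ℝ H (γ q)).comp (Lγ q) = 0 := by
      have h1 : HasFDerivAt (fun q => H (γ q)) ((fderiv ℝ H (γ q)).comp (Lγ q)) q :=
        ((hH.differentiable (by simp) (γ q)).hasFDerivAt).comp q (hdγ q)
      have h2 : (fun q => H (γ q)) = fun _ => (0:ℝ) := funext hHz
      rw [h2] at h1
      exact h1.unique (hasFDerivAt_const 0 q)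
    have hkey : ∀ j, fderiv ℝ H (γ q) ((Pi.single j 1 : Fin n → ℝ), 0, 0)
        + (∑ i, f'' q (Pi.single j 1) (Pi.single i 1) * fderiv ℝ H (γ q)
            ((0 : Fin n → ℝ), (Pi.single i 1 : Fin n → ℝ), (0:ℝ)))
        + P q j * fderiv ℝ H (γ q) ((0 : Fin n → ℝ), (0 : Fin n → ℝ), (1:ℝ)) = 0 := by
      intro j
      have h0 := DFunLike.congr_fun hchain (Pi.single j 1 : Fin n → ℝ)
      have heval : (fderiv ℝ H (γ q)).comp (Lγ q) (Pi.single j 1 : Fin n → ℝ)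
          = fderiv ℝ H (γ q) ((Pi.single j 1 : Fin n → ℝ),
              (fun i => f'' q (Pi.single j 1) (Pi.single i 1)), f' q (Pi.single j 1)) := rfl
      rw [heval] at h0
      rw [triple_expand] at h0
      have hsj : ∀ (X : Fin n → ℝ), (∑ i, (Pi.single j 1 : Fin n → ℝ) i * X i) = X j := by
        intro X
        rw [Finset.sum_eq_single j]
        · simp
        · intro b _ hb; simp [Pi.single_apply, Ne.symm hb]
        · simp
      rw [hsj] at h0
      simpa [hPdef, hΦ] using h0
    rw [hXH (γ q)]
    refine Prod.ext_iff.2 ⟨?_, Prod.ext_iff.2 ⟨?_, ?_⟩⟩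
    · exact funext fun i => (hA q i).symm
    · funext j
      show -(fderiv ℝ H (γ q) ((Pi.single j 1 : Fin n → ℝ), 0, 0)
          + (γ q).2.1 j * fderiv ℝ H (γ q) ((0 : Fin n → ℝ), (0 : Fin n → ℝ), (1:ℝ)))
        = (Lγ q (XHγ q)).2.1 j
      have hRj : (Lγ q (XHγ q)).2.1 j
          = ∑ i, fderiv ℝ H (γ q) ((0 : Fin n → ℝ), (Pi.single i 1 : Fin n → ℝ), (0:ℝ))
              * f'' q (Pi.single j 1) (Pi.single i 1) := by
        have : (Lγ q (XHγ q)).2.1 j = f'' q (XHγ q) (Pi.single j 1) := rfl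
        rw [this, pi_expand (f'' q) (XHγ q), ContinuousLinearMap.sum_apply]
        refine Finset.sum_congr rfl fun i _ => ?_
        rw [ContinuousLinearMap.smul_apply, smul_eq_mul, hA q i, hsymm q]
      rw [hRj, hγ2 q]
      have := hkey j
      have hcomm : (∑ i, fderiv ℝ H (γ q) ((0 : Fin n → ℝ), (Pi.single i 1 : Fin n → ℝ), (0:ℝ))
              * f'' q (Pi.single j 1) (Pi.single i 1))
          = ∑ i, f'' q (Pi.single j 1) (Pi.single i 1) * fderiv ℝ H (γ q)
              ((0 : Fin n → ℝ), (Pi.single i 1 : Fin n → ℝ), (0:ℝ)) :=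
        Finset.sum_congr rfl fun i _ => mul_comm _ _
      rw [hcomm]
      linarith [hkey j]
    · rw [h3comp q, hHz q]
      ring
end
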